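/- Under the hypotheses of the two-velocity SIR system with constant λ's, the macroscopic densities S = S⁺+S⁻, I = I⁺+I⁻, R = R⁺+R⁻ and fluxes J_S = λ_S(S⁺-S⁻), J_I = λ_I(I⁺-I⁻), J_R = λ_R(R⁺-R⁻) satisfy the six macroscopic equations: ∂ₜS + ∂ₓJ_S = -βSI; ∂ₜI + ∂ₓJ_I = βSI - γI; ∂ₜR + ∂ₓJ_R = γI; ∂ₜJ_S + λ_S² ∂ₓS = -β J_S I - J_S/τ_S; ∂ₜJ_I + λ_I² ∂ₓI = (λ_I/λ_S) β J_S I - γ J_I - J_I/τ_I; ∂ₜJ_R + λ_R² ∂ₓR = (λ_R/λ_I) γ J_I - J_R/τ_R. -/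

import Mathlib

/-!
Adding the `+` and `-` kinetic equations of one species cancels the relaxation terms and gives its
continuity equation; subtracting them and multiplying by `λ_C` turns the relaxation terms into the
damping `-J_C / τ_C`. The sources then only need rewriting in terms of `S, I, R` and the fluxes,
which uses `λ_I (S⁺ - S⁻) = (λ_I / λ_S) J_S` and `λ_R (I⁺ - I⁻) = (λ_R / λ_I) J_I`.
-/

section Slices

variable {𝕜 E F G : Type*} [NontriviallyNormedField 𝕜] [NormedAddCommGroup E] [NormedSpace 𝕜 E]
  [NormedAddCommGroup F] [NormedSpace 𝕜 F] [NormedAddCommGroup G] [NormedSpace 𝕜 G]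
  {f : E → F → G} {x : E} {t : F}

theorem DifferentiableAt.curry_left (hf : DifferentiableAt 𝕜 (fun p : E × F => f p.1 p.2) (x, t)) :
    DifferentiableAt 𝕜 (fun x' => f x' t) x :=
  hf.comp (f := fun x' => (x', t)) x (differentiableAt_id.prodMk (differentiableAt_const t))

theorem DifferentiableAt.curry_right (hf : DifferentiableAt 𝕜 (fun p : E × F => f p.1 p.2) (x, t)) :
    DifferentiableAt 𝕜 (fun t' => f x t') t :=
  hf.comp (f := fun t' => (x, t')) t ((differentiableAt_const x).prodMk differentiableAt_id)

end Slices

section TwoVelocity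

variable {Cp Cm : ℝ → ℝ → ℝ} {l τ x t qp qm : ℝ}
  (hp : DifferentiableAt ℝ (fun p : ℝ × ℝ => Cp p.1 p.2) (x, t))
  (hm : DifferentiableAt ℝ (fun p : ℝ × ℝ => Cm p.1 p.2) (x, t))
  (hpEq : deriv (fun t' => Cp x t') t + l * deriv (fun x' => Cp x' t) x
    = qp - (1 / (2 * τ)) * (Cp x t - Cm x t))
  (hmEq : deriv (fun t' => Cm x t') t - l * deriv (fun x' => Cm x' t) x
    = qm + (1 / (2 * τ)) * (Cp x t - Cm x t))
include hp hm hpEq hmEq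

theorem twoVelocity_density_balance :
    deriv (fun t' => Cp x t' + Cm x t') t + deriv (fun x' => l * (Cp x' t - Cm x' t)) x
      = qp + qm := by
  rw [deriv_fun_add hp.curry_right hm.curry_right,
    deriv_const_mul _ (hp.curry_left.fun_sub hm.curry_left),
    deriv_fun_sub hp.curry_left hm.curry_left]
  linear_combination hpEq + hmEq

theorem twoVelocity_flux_balance :
    deriv (fun t' => l * (Cp x t' - Cm x t')) t + l ^ 2 * deriv (fun x' => Cp x' t + Cm x' t) x
      = l * (qp - qm) - l * (Cp x t - Cm x t) / τ := by
  rw [deriv_const_mul _ (hp.curry_right.fun_sub hm.curry_right),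
    deriv_fun_sub hp.curry_right hm.curry_right,
    deriv_fun_add hp.curry_left hm.curry_left]
  linear_combination l * hpEq - l * hmEq

end TwoVelocity

theorem sir_macroscopic_formulation_general
    (lS lI lR tauS tauI tauR : ℝ)
    (hlS : lS > 0) (hlI : lI > 0)
    (Sp Sm Ip Im Rp Rm β γ : ℝ → ℝ → ℝ)
    (hSp : Differentiable ℝ (fun p : ℝ × ℝ => Sp p.1 p.2))
    (hSm : Differentiable ℝ (fun p : ℝ × ℝ => Sm p.1 p.2))
    (hIp : Differentiable ℝ (fun p : ℝ × ℝ => Ip p.1 p.2))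
    (hIm : Differentiable ℝ (fun p : ℝ × ℝ => Im p.1 p.2))
    (hRp : Differentiable ℝ (fun p : ℝ × ℝ => Rp p.1 p.2))
    (hRm : Differentiable ℝ (fun p : ℝ × ℝ => Rm p.1 p.2))
    (hSpEq : ∀ x t, deriv (fun t' => Sp x t') t + lS * deriv (fun x' => Sp x' t) x
      = -(β x t) * Sp x t * (Ip x t + Im x t) - (1/(2*tauS)) * (Sp x t - Sm x t))
    (hSmEq : ∀ x t, deriv (fun t' => Sm x t') t - lS * deriv (fun x' => Sm x' t) x
      = -(β x t) * Sm x t * (Ip x t + Im x t) + (1/(2*tauS)) * (Sp x t - Sm x t))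
    (hIpEq : ∀ x t, deriv (fun t' => Ip x t') t + lI * deriv (fun x' => Ip x' t) x
      = β x t * Sp x t * (Ip x t + Im x t) - γ x t * Ip x t - (1/(2*tauI)) * (Ip x t - Im x t))
    (hImEq : ∀ x t, deriv (fun t' => Im x t') t - lI * deriv (fun x' => Im x' t) x
      = β x t * Sm x t * (Ip x t + Im x t) - γ x t * Im x t + (1/(2*tauI)) * (Ip x t - Im x t))
    (hRpEq : ∀ x t, deriv (fun t' => Rp x t') t + lR * deriv (fun x' => Rp x' t) x
      = γ x t * Ip x t - (1/(2*tauR)) * (Rp x t - Rm x t))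
    (hRmEq : ∀ x t, deriv (fun t' => Rm x t') t - lR * deriv (fun x' => Rm x' t) x
      = γ x t * Im x t + (1/(2*tauR)) * (Rp x t - Rm x t)) :
    ∀ x t,
      (deriv (fun t' => Sp x t' + Sm x t') t + deriv (fun x' => lS * (Sp x' t - Sm x' t)) x
        = -(β x t) * (Sp x t + Sm x t) * (Ip x t + Im x t)) ∧
      (deriv (fun t' => Ip x t' + Im x t') t + deriv (fun x' => lI * (Ip x' t - Im x' t)) x
        = β x t * (Sp x t + Sm x t) * (Ip x t + Im x t) - γ x t * (Ip x t + Im x t)) ∧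
      (deriv (fun t' => Rp x t' + Rm x t') t + deriv (fun x' => lR * (Rp x' t - Rm x' t)) x
        = γ x t * (Ip x t + Im x t)) ∧
      (deriv (fun t' => lS * (Sp x t' - Sm x t')) t
          + lS^2 * deriv (fun x' => Sp x' t + Sm x' t) x
        = -(β x t) * (lS * (Sp x t - Sm x t)) * (Ip x t + Im x t)
          - (lS * (Sp x t - Sm x t)) / tauS) ∧
      (deriv (fun t' => lI * (Ip x t' - Im x t')) t
          + lI^2 * deriv (fun x' => Ip x' t + Im x' t) x
        = (lI/lS) * β x t * (lS * (Sp x t - Sm x t)) * (Ip x t + Im x t)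
          - γ x t * (lI * (Ip x t - Im x t)) - (lI * (Ip x t - Im x t)) / tauI) ∧
      (deriv (fun t' => lR * (Rp x t' - Rm x t')) t
          + lR^2 * deriv (fun x' => Rp x' t + Rm x' t) x
        = (lR/lI) * γ x t * (lI * (Ip x t - Im x t)) - (lR * (Rp x t - Rm x t)) / tauR) := by
  intro x t
  have hS := twoVelocity_density_balance (hSp _) (hSm _) (hSpEq x t) (hSmEq x t)
  have hI := twoVelocity_density_balance (hIp _) (hIm _) (hIpEq x t) (hImEq x t)
  have hR := twoVelocity_density_balance (hRp _) (hRm _) (hRpEq x t) (hRmEq x t)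
  have hJS := twoVelocity_flux_balance (hSp _) (hSm _) (hSpEq x t) (hSmEq x t)
  have hJI := twoVelocity_flux_balance (hIp _) (hIm _) (hIpEq x t) (hImEq x t)
  have hJR := twoVelocity_flux_balance (hRp _) (hRm _) (hRpEq x t) (hRmEq x t)
  refine ⟨hS.trans (by ring), hI.trans (by ring), hR.trans (by ring), hJS.trans (by ring),
    hJI.trans ?_, hJR.trans ?_⟩
  · field_simp [hlS.ne']
    ring
  · field_simp [hlI.ne']

/-- The macroscopic formulation of the two-velocity SIR transport system:
densities `S, I, R` and fluxes `J_C = λ_C(C⁺ - C⁻)` satisfy the six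
macroscopic equations. -/
theorem sir_macroscopic_formulation
    (lS lI lR tauS tauI tauR : ℝ)
    (hlS : lS > 0) (hlI : lI > 0) (hlR : lR > 0)
    (htauS : tauS > 0) (htauI : tauI > 0) (htauR : tauR > 0)
    (Sp Sm Ip Im Rp Rm β γ : ℝ → ℝ → ℝ)
    (hSp : Differentiable ℝ (fun p : ℝ × ℝ => Sp p.1 p.2))
    (hSm : Differentiable ℝ (fun p : ℝ × ℝ => Sm p.1 p.2))
    (hIp : Differentiable ℝ (fun p : ℝ × ℝ => Ip p.1 p.2))
    (hIm : Differentiable ℝ (fun p : ℝ × ℝ => Im p.1 p.2))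
    (hRp : Differentiable ℝ (fun p : ℝ × ℝ => Rp p.1 p.2))
    (hRm : Differentiable ℝ (fun p : ℝ × ℝ => Rm p.1 p.2))
    (hSpEq : ∀ x t, deriv (fun t' => Sp x t') t + lS * deriv (fun x' => Sp x' t) x
      = -(β x t) * Sp x t * (Ip x t + Im x t) - (1/(2*tauS)) * (Sp x t - Sm x t))
    (hSmEq : ∀ x t, deriv (fun t' => Sm x t') t - lS * deriv (fun x' => Sm x' t) x
      = -(β x t) * Sm x t * (Ip x t + Im x t) + (1/(2*tauS)) * (Sp x t - Sm x t))
    (hIpEq : ∀ x t, deriv (fun t' => Ip x t') t + lI * deriv (fun x' => Ip x' t) x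
      = β x t * Sp x t * (Ip x t + Im x t) - γ x t * Ip x t - (1/(2*tauI)) * (Ip x t - Im x t))
    (hImEq : ∀ x t, deriv (fun t' => Im x t') t - lI * deriv (fun x' => Im x' t) x
      = β x t * Sm x t * (Ip x t + Im x t) - γ x t * Im x t + (1/(2*tauI)) * (Ip x t - Im x t))
    (hRpEq : ∀ x t, deriv (fun t' => Rp x t') t + lR * deriv (fun x' => Rp x' t) x
      = γ x t * Ip x t - (1/(2*tauR)) * (Rp x t - Rm x t))
    (hRmEq : ∀ x t, deriv (fun t' => Rm x t') t - lR * deriv (fun x' => Rm x' t) x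
      = γ x t * Im x t + (1/(2*tauR)) * (Rp x t - Rm x t)) :
    ∀ x t,
      (deriv (fun t' => Sp x t' + Sm x t') t + deriv (fun x' => lS * (Sp x' t - Sm x' t)) x
        = -(β x t) * (Sp x t + Sm x t) * (Ip x t + Im x t)) ∧
      (deriv (fun t' => Ip x t' + Im x t') t + deriv (fun x' => lI * (Ip x' t - Im x' t)) x
        = β x t * (Sp x t + Sm x t) * (Ip x t + Im x t) - γ x t * (Ip x t + Im x t)) ∧
      (deriv (fun t' => Rp x t' + Rm x t') t + deriv (fun x' => lR * (Rp x' t - Rm x' t)) x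
        = γ x t * (Ip x t + Im x t)) ∧
      (deriv (fun t' => lS * (Sp x t' - Sm x t')) t
          + lS^2 * deriv (fun x' => Sp x' t + Sm x' t) x
        = -(β x t) * (lS * (Sp x t - Sm x t)) * (Ip x t + Im x t)
          - (lS * (Sp x t - Sm x t)) / tauS) ∧
      (deriv (fun t' => lI * (Ip x t' - Im x t')) t
          + lI^2 * deriv (fun x' => Ip x' t + Im x' t) x
        = (lI/lS) * β x t * (lS * (Sp x t - Sm x t)) * (Ip x t + Im x t)
          - γ x t * (lI * (Ip x t - Im x t)) - (lI * (Ip x t - Im x t)) / tauI) ∧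
      (deriv (fun t' => lR * (Rp x t' - Rm x t')) t
          + lR^2 * deriv (fun x' => Rp x' t + Rm x' t) x
        = (lR/lI) * γ x t * (lI * (Ip x t - Im x t)) - (lR * (Rp x t - Rm x t)) / tauR) :=
  sir_macroscopic_formulation_general lS lI lR tauS tauI tauR hlS hlI Sp Sm Ip Im Rp Rm β γ hSp hSm
    hIp hIm hRp hRm hSpEq hSmEq hIpEq hImEq hRpEq hRmEq
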